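/- The simplicial Hausdorff distance for filtered complexes satisfies the triangle inequality: for all filtered complexes (X,f), (Y,g), (Z,h), δ̂((X,f),(Z,h)) ≤ δ̂((X,f),(Y,g)) + δ̂((Y,g),(Z,h)). -/

import Mathlib

open scoped ENNReal

/-- A finite abstract simplicial complex on a finite vertex set. -/
structure SComplex (V : Type*) [DecidableEq V] where
  vertices : Finset V
  simplices : Finset (Finset V)
  nonempty_mem : ∀ σ ∈ simplices, σ.Nonempty
  subset_vertices : ∀ σ ∈ simplices, σ ⊆ vertices
  down_closed : ∀ σ ∈ simplices, ∀ τ, τ ⊆ σ → τ.Nonempty → τ ∈ simplices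
  singleton_mem : ∀ v ∈ vertices, ({v} : Finset V) ∈ simplices

/-- `(X,f)` is `ε`-close to `(Y,g)`: for every `k` and every `k`-simplex `σ` of `X`
there is a `k`-simplex `τ` of `Y` such that every vertex of `σ` is within `ε`
of some vertex of `τ`. -/
def IsEpsClose {V W : Type*} [DecidableEq V] [DecidableEq W] {d : ℕ}
    (X : SComplex V) (f : V → EuclideanSpace ℝ (Fin d))
    (Y : SComplex W) (g : W → EuclideanSpace ℝ (Fin d)) (ε : ℝ) : Prop :=
  ∀ σ ∈ X.simplices, ∃ τ ∈ Y.simplices, τ.card = σ.card ∧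
    ∀ v ∈ σ, ∃ w ∈ τ, dist (f v) (g w) < ε

/-- Directed simplicial Hausdorff distance, valued in `[0,∞]`. -/
noncomputable def dirDist {V W : Type*} [DecidableEq V] [DecidableEq W] {d : ℕ}
    (X : SComplex V) (f : V → EuclideanSpace ℝ (Fin d))
    (Y : SComplex W) (g : W → EuclideanSpace ℝ (Fin d)) : ℝ≥0∞ :=
  sInf (ENNReal.ofReal '' {ε : ℝ | 0 < ε ∧ IsEpsClose X f Y g ε})

/-- The simplicial Hausdorff distance. -/
noncomputable def sDelta {V W : Type*} [DecidableEq V] [DecidableEq W] {d : ℕ}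
    (X : SComplex V) (f : V → EuclideanSpace ℝ (Fin d))
    (Y : SComplex W) (g : W → EuclideanSpace ℝ (Fin d)) : ℝ≥0∞ :=
  max (dirDist X f Y g) (dirDist Y g X f)

/-- A filtered complex: a family of finite abstract simplicial complexes on a common
vertex set, indexed by `α > 0`, monotone in the index. -/
structure FilteredComplex (V : Type*) [DecidableEq V] where
  vertices : Finset V
  cplx : ℝ → SComplex V
  vertices_eq : ∀ α : ℝ, 0 < α → (cplx α).vertices = vertices
  mono : ∀ α β : ℝ, 0 < α → α ≤ β → (cplx α).simplices ⊆ (cplx β).simplices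

/-- Directed simplicial Hausdorff distance between filtered complexes:
the supremum over `α > 0` of the directed distances at each filtration level. -/
noncomputable def filtDirDist {V W : Type*} [DecidableEq V] [DecidableEq W] {d : ℕ}
    (X : FilteredComplex V) (f : V → EuclideanSpace ℝ (Fin d))
    (Y : FilteredComplex W) (g : W → EuclideanSpace ℝ (Fin d)) : ℝ≥0∞ :=
  ⨆ (α : ℝ) (_ : 0 < α), dirDist (X.cplx α) f (Y.cplx α) g

/-- The simplicial Hausdorff distance between filtered complexes. -/
noncomputable def filtDelta {V W : Type*} [DecidableEq V] [DecidableEq W] {d : ℕ}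
    (X : FilteredComplex V) (f : V → EuclideanSpace ℝ (Fin d))
    (Y : FilteredComplex W) (g : W → EuclideanSpace ℝ (Fin d)) : ℝ≥0∞ :=
  max (filtDirDist X f Y g) (filtDirDist Y g X f)

/-! Composing an `ε₁`-matching of simplices with an `ε₂`-matching gives an `(ε₁ + ε₂)`-matching,
by the triangle inequality in `ℝ^d`; infima, suprema over the filtration level and maxima of
the two directions all respect the resulting inequality. -/

section

variable {V W U : Type*} [DecidableEq V] [DecidableEq W] [DecidableEq U] {d : ℕ}

theorem IsEpsClose.trans {X : SComplex V} {f : V → EuclideanSpace ℝ (Fin d)}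
    {Y : SComplex W} {g : W → EuclideanSpace ℝ (Fin d)}
    {Z : SComplex U} {h : U → EuclideanSpace ℝ (Fin d)} {ε₁ ε₂ : ℝ}
    (hXY : IsEpsClose X f Y g ε₁) (hYZ : IsEpsClose Y g Z h ε₂) :
    IsEpsClose X f Z h (ε₁ + ε₂) := by
  intro σ hσ
  obtain ⟨τ, hτ, hστ, hστ_near⟩ := hXY σ hσ
  obtain ⟨ρ, hρ, hτρ, hτρ_near⟩ := hYZ τ hτ
  refine ⟨ρ, hρ, hτρ.trans hστ, fun v hv => ?_⟩
  obtain ⟨w, hw, hvw⟩ := hστ_near v hv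
  obtain ⟨u, hu, hwu⟩ := hτρ_near w hw
  exact ⟨u, hu, (dist_triangle _ (g w) _).trans_lt (add_lt_add hvw hwu)⟩

theorem dirDist_triangle (X : SComplex V) (f : V → EuclideanSpace ℝ (Fin d))
    (Y : SComplex W) (g : W → EuclideanSpace ℝ (Fin d))
    (Z : SComplex U) (h : U → EuclideanSpace ℝ (Fin d)) :
    dirDist X f Z h ≤ dirDist X f Y g + dirDist Y g Z h := by
  simp only [dirDist, sInf_image]
  refine ENNReal.le_iInf₂_add_iInf₂ fun ε₁ ⟨hε₁, hXY⟩ ε₂ ⟨hε₂, hYZ⟩ => ?_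
  rw [← ENNReal.ofReal_add hε₁.le hε₂.le]
  exact iInf₂_le _ ⟨add_pos hε₁ hε₂, hXY.trans hYZ⟩

theorem filtDirDist_triangle (X : FilteredComplex V) (f : V → EuclideanSpace ℝ (Fin d))
    (Y : FilteredComplex W) (g : W → EuclideanSpace ℝ (Fin d))
    (Z : FilteredComplex U) (h : U → EuclideanSpace ℝ (Fin d)) :
    filtDirDist X f Z h ≤ filtDirDist X f Y g + filtDirDist Y g Z h :=
  iSup₂_le fun α hα => (dirDist_triangle _ f _ g _ h).trans <|
    add_le_add (le_iSup₂_of_le α hα le_rfl) (le_iSup₂_of_le α hα le_rfl)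

end

theorem filtDelta_triangle_general {V W U : Type*} [DecidableEq V] [DecidableEq W] [DecidableEq U]
    {d : ℕ}
    (X : FilteredComplex V) (f : V → EuclideanSpace ℝ (Fin d))
    (Y : FilteredComplex W) (g : W → EuclideanSpace ℝ (Fin d))
    (Z : FilteredComplex U) (h : U → EuclideanSpace ℝ (Fin d)) :
    filtDelta X f Z h ≤ filtDelta X f Y g + filtDelta Y g Z h :=
  calc filtDelta X f Z h
      ≤ max (filtDirDist X f Y g + filtDirDist Y g Z h)
          (filtDirDist Y g X f + filtDirDist Z h Y g) :=
        max_le_max (filtDirDist_triangle X f Y g Z h)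
          ((filtDirDist_triangle Z h Y g X f).trans_eq (add_comm _ _))
    _ ≤ filtDelta X f Y g + filtDelta Y g Z h := max_add_add_le_max_add_max

/-- the simplicial Hausdorff distance for filtered complexes satisfies the
triangle inequality. -/
theorem filtDelta_triangle {V W U : Type*} [DecidableEq V] [DecidableEq W] [DecidableEq U]
    {d : ℕ}
    (X : FilteredComplex V) (f : V → EuclideanSpace ℝ (Fin d))
    (Y : FilteredComplex W) (g : W → EuclideanSpace ℝ (Fin d))
    (Z : FilteredComplex U) (h : U → EuclideanSpace ℝ (Fin d))
    (hf : Set.InjOn f ↑X.vertices) (hg : Set.InjOn g ↑Y.vertices)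
    (hh : Set.InjOn h ↑Z.vertices) :
    filtDelta X f Z h ≤ filtDelta X f Y g + filtDelta Y g Z h :=
  filtDelta_triangle_general X f Y g Z h
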